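/- arXiv:2103.11364 — 3 statements merged into one kernel-verified Lean document; each statement's English description precedes it below -/
import Mathlib

section
/- Arrow's Impossibility Theorem: if there are at least three candidates, any social welfare function (mapping profiles of linear orders to a linear order) that satisfies unanimity and independence of irrelevant alternatives is a dictatorship. -/
/-!
Geanakoplos' pivotal-voter proof. If every voter puts `b` at the top or the bottom of their
ranking, then so does society: otherwise `x > b > y` socially, and moving `y` above `x` in every
ranking without moving `b` would contradict unanimity via IIA. Let the voters, one after
another, move `b` from the bottom to the top of their rankings; at some voter `n` society's
ranking of `b` jumps from the bottom to the top. This pivotal voter dictates every pair `x, y`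
avoiding `b`: in a profile where `n` ranks `x > b > y`, IIA forces `x > b` and `b > y` socially.
Since the pivot for `b` can swing the social ranking of `b` against any `d`, no other voter
dictates such a pair, so the pivots of all candidates coincide and that voter is a dictator.
-/

/-- A strict linear order on `C`, represented as a relation together with a
proof that it is a strict total order. -/
def SLO (C : Type*) := {r : C → C → Prop // IsStrictTotalOrder C r}

instance Prod.Lex.isStrictTotalOrder {α β : Type*}
    (r : α → α → Prop) (s : β → β → Prop) [IsStrictTotalOrder α r] [IsStrictTotalOrder β s] :
    IsStrictTotalOrder (α × β) (Prod.Lex r s) where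

namespace SLO

variable {C : Type*}

theorem trans (r : SLO C) {x y z : C} (hxy : r.1 x y) (hyz : r.1 y z) : r.1 x z :=
  have := r.2; trans_of r.1 hxy hyz

theorem irrefl (r : SLO C) (x : C) : ¬ r.1 x x :=
  have := r.2; irrefl_of r.1 x

theorem asymm (r : SLO C) {x y : C} (hxy : r.1 x y) : ¬ r.1 y x :=
  fun hyx => r.irrefl x (r.trans hxy hyx)

theorem ne_of_rel (r : SLO C) {x y : C} (hxy : r.1 x y) : x ≠ y :=
  fun h => r.irrefl y (h ▸ hxy)

theorem rel_of_not_rel (r : SLO C) {x y : C} (hne : x ≠ y) (h : ¬ r.1 x y) : r.1 y x :=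
  have := r.2
  ((trichotomous_of r.1 x y).resolve_left h).resolve_left hne

theorem eq_of_rel_imp {r s : SLO C} (h : ∀ x y, r.1 x y → s.1 x y) : r = s := by
  refine Subtype.ext (funext₂ fun x y => propext ⟨h x y, fun hs => ?_⟩)
  by_contra hr
  exact s.asymm hs (h y x (r.rel_of_not_rel (s.ne_of_rel hs) hr))

instance : Nonempty (SLO C) := ⟨⟨WellOrderingRel, inferInstance⟩⟩

/-- `x` is ranked above `y` when `f x < f y`; ties are broken by `r`. -/
def lexBy (f : C → ℕ) (r : SLO C) : SLO C :=
  have := r.2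
  ⟨Function.onFun (Prod.Lex (· < ·) r.1) fun x => (f x, x),
    Function.Injective.isStrictTotalOrder_onFun _ fun _ _ h => congrArg Prod.snd h⟩

theorem lexBy_rel_iff (f : C → ℕ) (r : SLO C) (x y : C) :
    (lexBy f r).1 x y ↔ f x < f y ∨ f x = f y ∧ r.1 x y :=
  Prod.lex_def

open Classical in
noncomputable def moveToTop (b : C) (r : SLO C) : SLO C :=
  lexBy (fun x => if x = b then 0 else 1) r

open Classical in
noncomputable def moveToBot (b : C) (r : SLO C) : SLO C :=
  lexBy (fun x => if x = b then 1 else 0) r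

def IsTop (r : SLO C) (b : C) : Prop := ∀ x, x ≠ b → r.1 b x

def IsBot (r : SLO C) (b : C) : Prop := ∀ x, x ≠ b → r.1 x b

theorem isTop_moveToTop (b : C) (r : SLO C) : (moveToTop b r).IsTop b := fun x hx => by
  simp [moveToTop, lexBy_rel_iff, hx]

theorem isBot_moveToBot (b : C) (r : SLO C) : (moveToBot b r).IsBot b := fun x hx => by
  simp [moveToBot, lexBy_rel_iff, hx]

theorem moveToTop_rel_iff (b : C) (r : SLO C) {x y : C} (hx : x ≠ b) (hy : y ≠ b) :
    (moveToTop b r).1 x y ↔ r.1 x y := by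
  simp [moveToTop, lexBy_rel_iff, hx, hy]

theorem moveToBot_rel_iff (b : C) (r : SLO C) {x y : C} (hx : x ≠ b) (hy : y ≠ b) :
    (moveToBot b r).1 x y ↔ r.1 x y := by
  simp [moveToBot, lexBy_rel_iff, hx, hy]

theorem IsTop.rel_iff {r s : SLO C} {b x y : C} (hr : r.IsTop b) (hs : s.IsTop b)
    (hxy : x = b ∨ y = b) : r.1 x y ↔ s.1 x y := by
  by_cases hx : x = b <;> by_cases hy : y = b
  · subst hx hy; exact iff_of_false (r.irrefl _) (s.irrefl _)
  · subst hx; exact iff_of_true (hr y hy) (hs y hy)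
  · subst hy; exact iff_of_false (r.asymm (hr x hx)) (s.asymm (hs x hx))
  · exact absurd hxy (by tauto)

theorem IsBot.rel_iff {r s : SLO C} {b x y : C} (hr : r.IsBot b) (hs : s.IsBot b)
    (hxy : x = b ∨ y = b) : r.1 x y ↔ s.1 x y := by
  by_cases hx : x = b <;> by_cases hy : y = b
  · subst hx hy; exact iff_of_false (r.irrefl _) (s.irrefl _)
  · subst hx; exact iff_of_false (r.asymm (hr y hy)) (s.asymm (hs y hy))
  · subst hy; exact iff_of_true (hr x hx) (hs x hx)
  · exact absurd hxy (by tauto)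

theorem IsBot.not_isTop {r : SLO C} {b c : C} (h : r.IsBot b) (hc : c ≠ b) : ¬ r.IsTop b :=
  fun h' => r.asymm (h c hc) (h' c hc)

end SLO

theorem Set.Finite.exists_not_and_insert {α : Type*} {p : Set α → Prop} {s : Set α}
    (hs : s.Finite) (hempty : ¬ p ∅) (hps : p s) :
    ∃ t a, a ∉ t ∧ ¬ p t ∧ p (insert a t) := by
  induction s, hs using Set.Finite.induction_on with
  | empty => exact absurd hps hempty
  | @insert a t hat _ ih =>
    by_cases hpt : p t
    · exact ih hpt
    · exact ⟨t, a, hat, hpt, hps⟩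

namespace Arrow

open SLO

variable {V C : Type*}

def Unanimous (F : (V → SLO C) → SLO C) : Prop :=
  ∀ (R : V → SLO C) (x y : C), (∀ i, (R i).1 x y) → (F R).1 x y

def IIA (F : (V → SLO C) → SLO C) : Prop :=
  ∀ (R R' : V → SLO C) (x y : C),
    (∀ i, ((R i).1 x y ↔ (R' i).1 x y)) → ((F R).1 x y ↔ (F R').1 x y)

def IsDictatorOn (F : (V → SLO C) → SLO C) (n : V) (x y : C) : Prop :=
  ∀ R : V → SLO C, (R n).1 x y → (F R).1 x y

theorem Unanimous.isTop {F : (V → SLO C) → SLO C} (hU : Unanimous F) {R : V → SLO C} {b : C}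
    (h : ∀ i, (R i).IsTop b) : (F R).IsTop b :=
  fun x hx => hU R b x fun i => h i x hx

theorem Unanimous.isBot {F : (V → SLO C) → SLO C} (hU : Unanimous F) {R : V → SLO C} {b : C}
    (h : ∀ i, (R i).IsBot b) : (F R).IsBot b :=
  fun x hx => hU R x b fun i => h i x hx

open Classical in
noncomputable def extremize (A : Set V) (b : C) (R : V → SLO C) : V → SLO C :=
  fun i => if i ∈ A then moveToTop b (R i) else moveToBot b (R i)

section extremize

variable {A : Set V} {b : C} {R : V → SLO C} {i : V}

theorem isTop_extremize (hi : i ∈ A) : (extremize A b R i).IsTop b := by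
  simpa [extremize, hi] using isTop_moveToTop b (R i)

theorem isBot_extremize (hi : i ∉ A) : (extremize A b R i).IsBot b := by
  simpa [extremize, hi] using isBot_moveToBot b (R i)

theorem extremize_rel_iff {x y : C} (hx : x ≠ b) (hy : y ≠ b) :
    (extremize A b R i).1 x y ↔ (R i).1 x y := by
  by_cases hi : i ∈ A
  · simpa [extremize, hi] using moveToTop_rel_iff b (R i) hx hy
  · simpa [extremize, hi] using moveToBot_rel_iff b (R i) hx hy

theorem extremize_rel_iff_extremize (R' : V → SLO C) {x y : C} (hxy : x = b ∨ y = b) :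
    (extremize A b R i).1 x y ↔ (extremize A b R' i).1 x y := by
  by_cases hi : i ∈ A
  · exact (isTop_extremize hi).rel_iff (isTop_extremize hi) hxy
  · exact (isBot_extremize hi).rel_iff (isBot_extremize hi) hxy

theorem isTop_or_isBot_extremize : (extremize A b R i).IsTop b ∨ (extremize A b R i).IsBot b := by
  by_cases hi : i ∈ A
  · exact .inl (isTop_extremize hi)
  · exact .inr (isBot_extremize hi)

theorem extremize_insert_of_ne {n : V} (h : i ≠ n) :
    extremize (insert n A) b R i = extremize A b R i := by
  classical simp [extremize, h]

end extremize

variable {F : (V → SLO C) → SLO C}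

theorem isTop_or_isBot_of_forall (hU : Unanimous F) (hI : IIA F) {R : V → SLO C} {b : C}
    (hR : ∀ i, (R i).IsTop b ∨ (R i).IsBot b) : (F R).IsTop b ∨ (F R).IsBot b := by
  by_contra! h
  obtain ⟨x, hx, hbx⟩ := not_forall₂.mp h.1
  obtain ⟨y, hy, hyb⟩ := not_forall₂.mp h.2
  have hxb : (F R).1 x b := (F R).rel_of_not_rel (Ne.symm hx) hbx
  have hby : (F R).1 b y := (F R).rel_of_not_rel hy hyb
  -- raise `y` above `x` in every ranking while keeping `b` in place
  set R' := extremize {i | (R i).IsTop b} b fun i => moveToTop y (R i)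
  have hRR' : ∀ i {u v}, (u = b ∨ v = b) → ((R i).1 u v ↔ (R' i).1 u v) := by
    intro i u v huv
    by_cases hi : (R i).IsTop b
    · exact hi.rel_iff (isTop_extremize hi) huv
    · exact ((hR i).resolve_left hi).rel_iff (isBot_extremize hi) huv
  have hxy' : (F R').1 x y :=
    (F R').trans ((hI R R' x b fun i => hRR' i (.inr rfl)).mp hxb)
      ((hI R R' b y fun i => hRR' i (.inl rfl)).mp hby)
  have hyx' : (F R').1 y x := hU R' y x fun i =>
    (extremize_rel_iff hy hx).mpr
      (isTop_moveToTop y (R i) x ((F R).ne_of_rel ((F R).trans hxb hby)))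
  exact (F R').asymm hxy' hyx'

def IsPivot (F : (V → SLO C) → SLO C) (n : V) (b : C) : Prop :=
  ∃ (A : Set V) (R : V → SLO C), n ∉ A ∧ (F (extremize A b R)).IsBot b ∧
    (F (extremize (insert n A) b R)).IsTop b

theorem exists_isPivot [Finite V] (hU : Unanimous F) (hI : IIA F) {b c : C} (hcb : c ≠ b) :
    ∃ n, IsPivot F n b := by
  obtain ⟨R⟩ : Nonempty (V → SLO C) := inferInstance
  obtain ⟨A, n, hn, hA, hnA⟩ := (Set.toFinite Set.univ).exists_not_and_insert
    (p := fun A => (F (extremize A b R)).IsTop b)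
    ((hU.isBot fun i => isBot_extremize (Set.notMem_empty i)).not_isTop hcb)
    (hU.isTop fun i => isTop_extremize (Set.mem_univ i))
  exact ⟨n, A, R, hn,
    (isTop_or_isBot_of_forall hU hI fun _ => isTop_or_isBot_extremize).resolve_left hA, hnA⟩

theorem IsPivot.isDictatorOn (hI : IIA F) {n : V} {b x y : C} (h : IsPivot F n b)
    (hx : x ≠ b) (hy : y ≠ b) : IsDictatorOn F n x y := by
  classical
  obtain ⟨A, R₀, hn, hbot, htop⟩ := h
  intro R hxy
  have hxy_ne : x ≠ y := (R n).ne_of_rel hxy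
  -- `n` ranks `x > b > y`; every other voter puts `b` where the pivot profiles put it
  set Q := Function.update (extremize A b R) n (moveToTop x (moveToTop b (R n)))
  have hQ_ne : ∀ i, i ≠ n → Q i = extremize A b R i :=
    fun _ hi => Function.update_of_ne hi _ _
  have hQn : Q n = moveToTop x (moveToTop b (R n)) := Function.update_self _ _ _
  have hxb : (F Q).1 x b := by
    refine (hI _ Q x b fun i => ?_).mp (hbot x hx)
    obtain rfl | hi := eq_or_ne i n
    · rw [hQn]
      exact iff_of_true (isBot_extremize hn x hx) (isTop_moveToTop x _ b hx.symm)
    · rw [hQ_ne i hi]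
      exact extremize_rel_iff_extremize R (.inr rfl)
  have hby : (F Q).1 b y := by
    refine (hI _ Q b y fun i => ?_).mp (htop y hy)
    obtain rfl | hi := eq_or_ne i n
    · rw [hQn]
      exact iff_of_true (isTop_extremize (Set.mem_insert i A) y hy)
        ((moveToTop_rel_iff x _ hx.symm hxy_ne.symm).mpr (isTop_moveToTop b _ y hy))
    · rw [hQ_ne i hi, extremize_insert_of_ne hi]
      exact extremize_rel_iff_extremize R (.inl rfl)
  refine (hI R Q x y fun i => ?_).mpr ((F Q).trans hxb hby)
  obtain rfl | hi := eq_or_ne i n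
  · rw [hQn]
    exact iff_of_true hxy (isTop_moveToTop x _ y hxy_ne.symm)
  · rw [hQ_ne i hi]
    exact (extremize_rel_iff hx hy).symm

theorem IsPivot.eq_of_isDictatorOn {n m : V} {b d : C} (h : IsPivot F n b) (hd : d ≠ b)
    (hdb : IsDictatorOn F m d b) (hbd : IsDictatorOn F m b d) : m = n := by
  obtain ⟨A, R, -, hbot, htop⟩ := h
  by_contra hmn
  by_cases hm : (extremize A b R m).1 d b
  · exact (F _).asymm (htop d hd) (hdb _ (by rwa [extremize_insert_of_ne hmn]))
  · exact (F _).asymm (hbot d hd) (hbd _ ((extremize A b R m).rel_of_not_rel hd hm))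

theorem IsPivot.eq_of_ne (hI : IIA F) (hC : 3 ≤ ENat.card C) {n m : V} {a b : C}
    (hn : IsPivot F n a) (hm : IsPivot F m b) (hab : a ≠ b) : m = n := by
  obtain ⟨d, hda, hdb⟩ := ENat.exists_ne_ne_of_three_le hC a b
  exact hn.eq_of_isDictatorOn hda (hm.isDictatorOn hI hdb hab) (hm.isDictatorOn hI hab hdb)

theorem IsPivot.eq [Finite V] (hU : Unanimous F) (hI : IIA F) (hC : 3 ≤ ENat.card C)
    {n m : V} {a b : C} (hn : IsPivot F n a) (hm : IsPivot F m b) : m = n := by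
  obtain ⟨c, hca, hcb⟩ := ENat.exists_ne_ne_of_three_le hC a b
  obtain ⟨p, hp⟩ := exists_isPivot hU hI hca.symm
  rw [hp.eq_of_ne hI hC hm hcb, hp.eq_of_ne hI hC hn hca]

end Arrow

theorem arrows_impossibility_general {V C : Type*} [Fintype V] [Fintype C]
    (hC : 3 ≤ Fintype.card C)
    (F : (V → SLO C) → SLO C)
    (unanimity : ∀ (R : V → SLO C) (x y : C), (∀ i, (R i).1 x y) → (F R).1 x y)
    (iia : ∀ (R R' : V → SLO C) (x y : C),
      (∀ i, ((R i).1 x y ↔ (R' i).1 x y)) → ((F R).1 x y ↔ (F R').1 x y)) :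
    ∃ i : V, ∀ R : V → SLO C, F R = R i := by
  have hC' : 3 ≤ ENat.card C := by simpa [ENat.card_eq_coe_fintype_card] using hC
  obtain ⟨c, b, hcb⟩ := Fintype.one_lt_card_iff.mp (by omega : 1 < Fintype.card C)
  obtain ⟨n, hn⟩ := Arrow.exists_isPivot unanimity iia hcb
  refine ⟨n, fun R => (SLO.eq_of_rel_imp fun x y hxy => ?_).symm⟩
  obtain ⟨a, hax, hay⟩ := ENat.exists_ne_ne_of_three_le hC' x y
  obtain ⟨m, hm⟩ := Arrow.exists_isPivot unanimity iia hax.symm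
  rw [← hn.eq unanimity iia hC' hm] at hxy
  exact hm.isDictatorOn iia hax.symm hay.symm R hxy

/-- Arrow's Impossibility Theorem: any social welfare function on at least three
candidates satisfying unanimity and IIA is a dictatorship. -/
theorem arrows_impossibility {V C : Type*} [Fintype V] [Fintype C]
    (hV : 2 ≤ Fintype.card V) (hC : 3 ≤ Fintype.card C)
    (F : (V → SLO C) → SLO C)
    (unanimity : ∀ (R : V → SLO C) (x y : C), (∀ i, (R i).1 x y) → (F R).1 x y)
    (iia : ∀ (R R' : V → SLO C) (x y : C),
      (∀ i, ((R i).1 x y ↔ (R' i).1 x y)) → ((F R).1 x y ↔ (F R').1 x y)) :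
    ∃ i : V, ∀ R : V → SLO C, F R = R i :=
  arrows_impossibility_general hC F unanimity iia
end

section
/- Quantum Condorcet Voting violates sharp dictatorship on the Condorcet cycle: for the profile ρ₁ ⊗ ρ₂ ⊗ ρ₃ with ρ₁ = |x≻y≻z⟩⟨x≻y≻z|, ρ₂ = |y≻z≻x⟩⟨y≻z≻x|, ρ₃ = |z≻x≻y⟩⟨z≻x≻y|, whose output is the uniform mixture σ over all six linear orders, for each voter i there is a pair (a,b) with Tr(Π^{a≻b} ρᵢ) = 1 but Tr(Π^{a≻b} σ) < 1. -/
/-!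
Every basis order `R` is a common eigenvector of all the pairwise projections, so
`Tr(Π^{a≻b} |R⟩⟨R|)` is `1` or `0` according as `R` ranks `a` above `b`. The output `σ` is the
maximally mixed state, so `Tr(Π^{a≻b} σ)` is the fraction of the six orders ranking `a` above `b`,
which is below `1` as soon as one order ranks `b` above `a`. On the Condorcet cycle each voter's
top pair is reversed by the next voter's order.
-/

open Matrix Finset

theorem Matrix.trace_diagonal_mul_single_one {ι R : Type*} [Fintype ι] [DecidableEq ι]
    [Semiring R] (d : ι → R) (i : ι) : (diagonal d * single i i 1).trace = d i := by
  simp [trace_mul_single]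

theorem Matrix.re_trace_diagonal_boole_mul_uniform_lt_one {ι : Type*} [Fintype ι]
    [DecidableEq ι] (p : ι → Prop) [DecidablePred p] {i₀ : ι} (h : ¬ p i₀) :
    ((diagonal fun i => if p i then (1 : ℂ) else 0) *
      ((Fintype.card ι : ℂ)⁻¹ • 1)).trace.re < 1 := by
  have hcount : #{i | p i} < Fintype.card ι :=
    card_lt_univ_of_notMem (x := i₀) (by simpa using h)
  have hpos : (0 : ℝ) < Fintype.card ι := by exact_mod_cast (Nat.zero_le _).trans_lt hcount
  rw [Matrix.mul_smul, mul_one, trace_smul, trace_diagonal, sum_boole, smul_eq_mul,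
    ← Complex.ofReal_natCast, ← Complex.ofReal_natCast, ← Complex.ofReal_inv,
    ← Complex.ofReal_mul, Complex.ofReal_re, inv_mul_lt_one₀ hpos]
  exact_mod_cast hcount

theorem Fintype.card_equiv_fin_card_eq_six {C : Type*} [Fintype C] [DecidableEq C]
    (hcard : Fintype.card C = 3) : Fintype.card (C ≃ Fin (Fintype.card C)) = 6 := by
  rw [Fintype.card_equiv (Fintype.equivFin C), hcard]
  rfl

theorem qcv_violates_sharp_dictatorship_general {C : Type*} [Fintype C] [DecidableEq C]
    (hcard : Fintype.card C = 3) (x y z : C)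
    (R1 R2 R3 : C ≃ Fin (Fintype.card C))
    (h1 : R1 x < R1 y ∧ R1 y < R1 z)
    (h2 : R2 y < R2 z ∧ R2 z < R2 x)
    (h3 : R3 z < R3 x ∧ R3 x < R3 y) :
    let proj : C → C → Matrix (C ≃ Fin (Fintype.card C)) (C ≃ Fin (Fintype.card C)) ℂ :=
      fun a b => Matrix.diagonal fun Q => if Q a < Q b then (1 : ℂ) else 0
    let σ : Matrix (C ≃ Fin (Fintype.card C)) (C ≃ Fin (Fintype.card C)) ℂ :=
      (1 / 6 : ℂ) • ∑ R : C ≃ Fin (Fintype.card C), Matrix.single R R (1 : ℂ)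
    (∃ a b : C, (proj a b * Matrix.single R1 R1 (1 : ℂ)).trace = 1 ∧
        (proj a b * σ).trace.re < 1) ∧
    (∃ a b : C, (proj a b * Matrix.single R2 R2 (1 : ℂ)).trace = 1 ∧
        (proj a b * σ).trace.re < 1) ∧
    (∃ a b : C, (proj a b * Matrix.single R3 R3 (1 : ℂ)).trace = 1 ∧
        (proj a b * σ).trace.re < 1) := by
  intro proj σ
  have hσ : σ = ((Fintype.card (C ≃ Fin (Fintype.card C)) : ℂ)⁻¹ • 1) := by
    rw [Fintype.card_equiv_fin_card_eq_six hcard]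
    simp only [σ, sum_single_one]
    norm_num
  have certain (a b : C) (R : C ≃ Fin (Fintype.card C)) (h : R a < R b) :
      (proj a b * single R R 1).trace = 1 := by
    simp [proj, trace_diagonal_mul_single_one, h]
  have uncertain (a b : C) (Q : C ≃ Fin (Fintype.card C)) (h : ¬ Q a < Q b) :
      (proj a b * σ).trace.re < 1 :=
    hσ ▸ re_trace_diagonal_boole_mul_uniform_lt_one
      (fun Q : C ≃ Fin (Fintype.card C) => Q a < Q b) h
  exact ⟨⟨x, y, certain x y R1 h1.1, uncertain x y R2 (lt_asymm (h2.1.trans h2.2))⟩,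
    ⟨y, z, certain y z R2 h2.1, uncertain y z R3 (lt_asymm (h3.1.trans h3.2))⟩,
    ⟨z, x, certain z x R3 h3.1, uncertain z x R1 (lt_asymm (h1.1.trans h1.2))⟩⟩

/-- Quantum Condorcet Voting violates sharp dictatorship on the Condorcet
cycle: for the basis profile x≻y≻z, y≻z≻x, z≻x≻y whose output is the uniform
mixture σ over all six linear orders, each voter has a pair `(a,b)` with
`Tr(Π^{a≻b}ρᵢ) = 1` but `Tr(Π^{a≻b}σ) < 1`. -/
theorem qcv_violates_sharp_dictatorship {C : Type*} [Fintype C] [DecidableEq C]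
    (hcard : Fintype.card C = 3) (x y z : C)
    (hxy : x ≠ y) (hyz : y ≠ z) (hxz : x ≠ z)
    (R1 R2 R3 : C ≃ Fin (Fintype.card C))
    (h1 : R1 x < R1 y ∧ R1 y < R1 z)
    (h2 : R2 y < R2 z ∧ R2 z < R2 x)
    (h3 : R3 z < R3 x ∧ R3 x < R3 y) :
    let proj : C → C → Matrix (C ≃ Fin (Fintype.card C)) (C ≃ Fin (Fintype.card C)) ℂ :=
      fun a b => Matrix.diagonal fun Q => if Q a < Q b then (1 : ℂ) else 0
    let σ : Matrix (C ≃ Fin (Fintype.card C)) (C ≃ Fin (Fintype.card C)) ℂ :=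
      (1 / 6 : ℂ) • ∑ R : C ≃ Fin (Fintype.card C), Matrix.single R R (1 : ℂ)
    (∃ a b : C, (proj a b * Matrix.single R1 R1 (1 : ℂ)).trace = 1 ∧
        (proj a b * σ).trace.re < 1) ∧
    (∃ a b : C, (proj a b * Matrix.single R2 R2 (1 : ℂ)).trace = 1 ∧
        (proj a b * σ).trace.re < 1) ∧
    (∃ a b : C, (proj a b * Matrix.single R3 R3 (1 : ℂ)).trace = 1 ∧
        (proj a b * σ).trace.re < 1) :=
  qcv_violates_sharp_dictatorship_general hcard x y z R1 R2 R3 h1 h2 h3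
end

section
/- Quantum Condorcet Voting violates unsharp dictatorship on the Condorcet cycle: with the same profile and output σ as above, for each voter i there is a pair (a,b) with Tr(Π^{a≻b} σ) > 0 but Tr(Π^{a≻b} ρᵢ) = 0. -/
/-! The maximally mixed state σ weighs every linear order by 1/6, so `Tr(Π^{a≻b} σ)` is a
positive multiple of the number of orders ranking `a` above `b`, positive as soon as one voter
does. On the pure state of voter `i` the same trace is `1` or `0` according to voter `i`'s
order. In the Condorcet cycle every voter is contradicted on some pair by another voter:
voter 2 ranks `z` above `x` against voter 1, voter 1 ranks `x` above `y` against voter 2, and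
voter 1 ranks `y` above `z` against voter 3. -/

open Matrix

namespace Matrix

variable {n R : Type*} [Fintype n] [DecidableEq n]

theorem trace_diagonal_mul_single_self_one [Semiring R] (d : n → R) (i : n) :
    (diagonal d * single i i (1 : R)).trace = d i := by
  simp [trace_mul_single]

theorem trace_diagonal_mul_smul_sum_single_one [CommSemiring R] (d : n → R) (c : R) :
    (diagonal d * (c • ∑ k : n, single k k (1 : R))).trace = c * ∑ k, d k := by
  rw [sum_single_one, Matrix.mul_smul, mul_one, trace_smul, trace_diagonal, smul_eq_mul]

theorem re_trace_diagonal_indicator_mul_smul_sum_single_pos (p : n → Prop) [DecidablePred p]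
    {c : ℂ} (hc : 0 < c.re) {i : n} (hi : p i) :
    0 < (diagonal (fun k => if p k then (1 : ℂ) else 0) *
      (c • ∑ k : n, single k k (1 : ℂ))).trace.re := by
  have hcard : 0 < (Finset.univ.filter p).card := Finset.card_pos.mpr ⟨i, by simpa using hi⟩
  rw [trace_diagonal_mul_smul_sum_single_one, Finset.sum_boole, ← Complex.ofReal_natCast,
    Complex.re_mul_ofReal]
  exact mul_pos hc (by exact_mod_cast hcard)

end Matrix

theorem qcv_violates_unsharp_dictatorship_general {C : Type*} [Fintype C] [DecidableEq C]
    (x y z : C)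
    (R1 R2 R3 : C ≃ Fin (Fintype.card C))
    (h1 : R1 x < R1 y ∧ R1 y < R1 z)
    (h2 : R2 y < R2 z ∧ R2 z < R2 x)
    (h3 : R3 z < R3 x ∧ R3 x < R3 y) :
    let proj : C → C → Matrix (C ≃ Fin (Fintype.card C)) (C ≃ Fin (Fintype.card C)) ℂ :=
      fun a b => Matrix.diagonal fun Q => if Q a < Q b then (1 : ℂ) else 0
    let σ : Matrix (C ≃ Fin (Fintype.card C)) (C ≃ Fin (Fintype.card C)) ℂ :=
      (1 / 6 : ℂ) • ∑ R : C ≃ Fin (Fintype.card C), Matrix.single R R (1 : ℂ)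
    (∃ a b : C, 0 < (proj a b * σ).trace.re ∧
        (proj a b * Matrix.single R1 R1 (1 : ℂ)).trace = 0) ∧
    (∃ a b : C, 0 < (proj a b * σ).trace.re ∧
        (proj a b * Matrix.single R2 R2 (1 : ℂ)).trace = 0) ∧
    (∃ a b : C, 0 < (proj a b * σ).trace.re ∧
        (proj a b * Matrix.single R3 R3 (1 : ℂ)).trace = 0) := by
  intro proj σ
  have hc : 0 < (1 / 6 : ℂ).re := by norm_num
  refine ⟨⟨z, x, ?_, ?_⟩, ⟨x, y, ?_, ?_⟩, ⟨y, z, ?_, ?_⟩⟩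
  · exact re_trace_diagonal_indicator_mul_smul_sum_single_pos _ hc h2.2
  · exact (trace_diagonal_mul_single_self_one _ R1).trans (if_neg (h1.1.trans h1.2).asymm)
  · exact re_trace_diagonal_indicator_mul_smul_sum_single_pos _ hc h1.1
  · exact (trace_diagonal_mul_single_self_one _ R2).trans (if_neg (h2.1.trans h2.2).asymm)
  · exact re_trace_diagonal_indicator_mul_smul_sum_single_pos _ hc h1.2
  · exact (trace_diagonal_mul_single_self_one _ R3).trans (if_neg (h3.1.trans h3.2).asymm)

/-- Quantum Condorcet Voting violates unsharp dictatorship on the Condorcet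
cycle: with the same profile and output σ, each voter has a pair `(a,b)` with
`Tr(Π^{a≻b}σ) > 0` but `Tr(Π^{a≻b}ρᵢ) = 0`. -/
theorem qcv_violates_unsharp_dictatorship {C : Type*} [Fintype C] [DecidableEq C]
    (hcard : Fintype.card C = 3) (x y z : C)
    (hxy : x ≠ y) (hyz : y ≠ z) (hxz : x ≠ z)
    (R1 R2 R3 : C ≃ Fin (Fintype.card C))
    (h1 : R1 x < R1 y ∧ R1 y < R1 z)
    (h2 : R2 y < R2 z ∧ R2 z < R2 x)
    (h3 : R3 z < R3 x ∧ R3 x < R3 y) :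
    let proj : C → C → Matrix (C ≃ Fin (Fintype.card C)) (C ≃ Fin (Fintype.card C)) ℂ :=
      fun a b => Matrix.diagonal fun Q => if Q a < Q b then (1 : ℂ) else 0
    let σ : Matrix (C ≃ Fin (Fintype.card C)) (C ≃ Fin (Fintype.card C)) ℂ :=
      (1 / 6 : ℂ) • ∑ R : C ≃ Fin (Fintype.card C), Matrix.single R R (1 : ℂ)
    (∃ a b : C, 0 < (proj a b * σ).trace.re ∧
        (proj a b * Matrix.single R1 R1 (1 : ℂ)).trace = 0) ∧
    (∃ a b : C, 0 < (proj a b * σ).trace.re ∧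
        (proj a b * Matrix.single R2 R2 (1 : ℂ)).trace = 0) ∧
    (∃ a b : C, 0 < (proj a b * σ).trace.re ∧
        (proj a b * Matrix.single R3 R3 (1 : ℂ)).trace = 0) :=
  qcv_violates_unsharp_dictatorship_general x y z R1 R2 R3 h1 h2 h3
end
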